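/- arXiv:2605.19598 — 2 statements merged into one kernel-verified Lean document; each statement's English description precedes it below -/
import Mathlib

section
/- The relaxed energy density W_rel defined on 2×2 symmetric matrices F by W_rel(F) = (λ₁(F))₊² + (λ₂(F))₊², where λ₁, λ₂ are the eigenvalues of F and λ₊ = max{λ,0}, equals the infimum of |F + A|² (Frobenius norm squared) over all symmetric positive semidefinite 2×2 matrices A. -/
open Matrix

lemma frob_trace (M : Matrix (Fin 2) (Fin 2) ℝ) :
    ∑ i, ∑ j, (M i j)^2 = (Mᴴ * M).trace := by
  simp only [Matrix.trace, Matrix.diag, Matrix.mul_apply, conjTranspose_apply, star_trivial, sq]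
  rw [Finset.sum_comm]

lemma frob_conj (U M : Matrix (Fin 2) (Fin 2) ℝ) (hU : star U * U = 1) (hU2 : U * star U = 1) :
    ∑ i, ∑ j, ((U * M * star U) i j)^2 = ∑ i, ∑ j, (M i j)^2 := by
  rw [frob_trace, frob_trace]
  have h1 : (U * M * star U)ᴴ = U * Mᴴ * star U := by
    simp [Matrix.star_eq_conjTranspose, Matrix.conjTranspose_mul, Matrix.mul_assoc]
  rw [h1]
  have : U * Mᴴ * star U * (U * M * star U) = U * (Mᴴ * M) * star U := by
    simp only [Matrix.mul_assoc]
    rw [← Matrix.mul_assoc (star U) U, hU, Matrix.one_mul]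
  rw [this, Matrix.trace_mul_cycle, ← Matrix.mul_assoc, hU, Matrix.one_mul]

lemma max_sq_le (l b : ℝ) (hb : 0 ≤ b) : (max l 0)^2 ≤ (l + b)^2 := by
  rcases le_total l 0 with h | h
  · rw [max_eq_right h]; simpa using sq_nonneg (l + b)
  · rw [max_eq_left h]; nlinarith

/-- The relaxed energy density `W_rel(F) = (λ₁(F))₊² + (λ₂(F))₊²` equals the infimum of the
squared Frobenius norm `|F + A|²` over all symmetric positive semidefinite matrices `A`. -/
theorem Wrel_eq_inf (F : Matrix (Fin 2) (Fin 2) ℝ) (hF : F.IsHermitian) :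
    (max (hF.eigenvalues 0) 0) ^ 2 + (max (hF.eigenvalues 1) 0) ^ 2 =
      sInf {x : ℝ | ∃ A : Matrix (Fin 2) (Fin 2) ℝ, A.PosSemidef ∧
        x = ∑ i, ∑ j, (F i j + A i j) ^ 2} := by
  set U : Matrix (Fin 2) (Fin 2) ℝ := (hF.eigenvectorUnitary : Matrix (Fin 2) (Fin 2) ℝ) with hUdef
  have hU1 : star U * U = 1 := Matrix.mem_unitaryGroup_iff'.mp hF.eigenvectorUnitary.2
  have hU2 : U * star U = 1 := Matrix.mem_unitaryGroup_iff.mp hF.eigenvectorUnitary.2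
  set l : Fin 2 → ℝ := hF.eigenvalues
  have hspec : F = U * diagonal l * star U := by
    have := hF.spectral_theorem
    simpa using this
  -- the minimizer
  set A₀ : Matrix (Fin 2) (Fin 2) ℝ := U * diagonal (fun i => max (-l i) 0) * star U with hA₀
  have hA₀psd : A₀.PosSemidef := by
    rw [hA₀, Matrix.star_eq_conjTranspose]
    exact (Matrix.PosSemidef.diagonal (fun i => le_max_right _ _)).mul_mul_conjTranspose_same U
  have hFA₀ : F + A₀ = U * diagonal (fun i => max (l i) 0) * star U := by
    have hfun : (fun i => l i + max (-l i) 0) = fun i => max (l i) 0 := by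
      funext i
      rcases le_total (l i) 0 with h | h
      · rw [max_eq_right h, max_eq_left (neg_nonneg.mpr h)]; ring
      · rw [max_eq_left h, max_eq_right (neg_nonpos.mpr h)]; ring
    rw [hspec, hA₀, ← Matrix.add_mul, ← Matrix.mul_add, Matrix.diagonal_add, hfun]
  have hval : ∑ i, ∑ j, (F i j + A₀ i j)^2 =
      (max (l 0) 0)^2 + (max (l 1) 0)^2 := by
    have : ∀ i j, F i j + A₀ i j = (U * diagonal (fun i => max (l i) 0) * star U) i j := by
      intro i j; rw [← hFA₀]; simp [Matrix.add_apply]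
    simp only [this]
    rw [frob_conj _ _ hU1 hU2]
    simp [Fin.sum_univ_two, Matrix.diagonal_apply]
  refine le_antisymm (le_csInf ⟨_, ⟨A₀, hA₀psd, rfl⟩⟩ ?_) (csInf_le ?_ ⟨A₀, hA₀psd, hval.symm⟩)
  · rintro x ⟨A, hA, rfl⟩
    set B : Matrix (Fin 2) (Fin 2) ℝ := star U * A * U with hB
    have hBpsd : B.PosSemidef := by
      rw [hB, Matrix.star_eq_conjTranspose, show U = (star U)ᴴ by simp [Matrix.star_eq_conjTranspose]]
      exact hA.mul_mul_conjTranspose_same (star U)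
    have hUBU : U * B * star U = A := by
      rw [hB]
      simp only [Matrix.mul_assoc]
      rw [hU2, Matrix.mul_one, ← Matrix.mul_assoc, hU2, Matrix.one_mul]
    have hFA : F + A = U * (diagonal l + B) * star U := by
      rw [Matrix.mul_add, Matrix.add_mul, hUBU, ← hspec]
    have h1 : ∑ i, ∑ j, (F i j + A i j)^2 = ∑ i, ∑ j, ((diagonal l + B) i j)^2 := by
      have : ∀ i j, F i j + A i j = (U * (diagonal l + B) * star U) i j := by
        intro i j; rw [← hFA]; simp [Matrix.add_apply]
      simp only [this]
      exact frob_conj _ _ hU1 hU2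
    have hB00 : 0 ≤ B 0 0 := by
      exact hBpsd.diag_nonneg (i := 0)
    have hB11 : 0 ≤ B 1 1 := by
      exact hBpsd.diag_nonneg (i := 1)
    rw [h1]
    simp only [Fin.sum_univ_two, Matrix.add_apply, Matrix.diagonal_apply_eq,
      Matrix.diagonal_apply_ne _ (by decide : (0:Fin 2) ≠ 1),
      Matrix.diagonal_apply_ne _ (by decide : (1:Fin 2) ≠ 0), zero_add]
    have h0 := max_sq_le (l 0) (B 0 0) hB00
    have h1' := max_sq_le (l 1) (B 1 1) hB11
    nlinarith [sq_nonneg (B 0 1), sq_nonneg (B 1 0)]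
  · refine ⟨0, ?_⟩
    rintro x ⟨A, hA, rfl⟩
    positivity
end

section
/- Let 0 < R_in < R₀ and T_in > 0, and define β(r) := √(−u⋆(r)·r) for r ∈ (R_in, R₀), where u⋆(r) = T_in·R_in·log(r/R₀). Then there exists a constant C > 0 such that for all r ∈ (R_in, R₀): |β(r)| ≤ C·√(R₀ − r), |β'(r)| ≤ C/√(R₀ − r), and |β''(r)| ≤ C/(R₀ − r)^{3/2}. -/
private lemma beta_aux_ub (K R0 r lg : ℝ) (hK : 0 < K) (hr : 0 < r)
    (h : -lg ≤ R0 / r - 1) : -(r * (K * lg)) ≤ K * (R0 - r) := by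
  have hcan : r * (R0 / r) = R0 := by field_simp
  nlinarith [mul_le_mul_of_nonneg_left h (le_of_lt (mul_pos hr hK)), hcan, hK]

private lemma beta_aux_lb (K Rin R0 r lg : ℝ) (hK : 0 < K) (hRin : 0 < Rin) (hR0 : 0 < R0)
    (hr1 : Rin ≤ r) (hr2 : r ≤ R0) (h : lg ≤ r / R0 - 1) :
    K * Rin / R0 * (R0 - r) ≤ -(r * (K * lg)) := by
  have hrpos : 0 < r := lt_of_lt_of_le hRin hr1
  have hcan2 : R0 * (r / R0) = r := by field_simp
  have hRlg : R0 * lg ≤ r - R0 := by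
    have := mul_le_mul_of_nonneg_left h hR0.le
    linarith only [this, hcan2]
  rw [div_mul_eq_mul_div, div_le_iff₀ hR0]
  have h1 := mul_le_mul_of_nonneg_left hRlg (le_of_lt (mul_pos hrpos hK))
  have h2 := mul_le_mul_of_nonneg_right hr1 (mul_nonneg hK.le (by linarith : (0:ℝ) ≤ R0 - r))
  nlinarith [h1, h2]

private lemma beta_aux_v (K L lg : ℝ) (hK : 0 < K) (hL : 0 ≤ L) (hlogneg : lg < 0)
    (hloglb : -L ≤ lg) : |(-(K * (lg + 1)))| ≤ K * (1 + L) := by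
  have ha := mul_le_mul_of_nonneg_left (show lg ≤ L by linarith) hK.le
  have hb := mul_le_mul_of_nonneg_left hloglb hK.le
  rw [abs_le]
  constructor
  · nlinarith [ha]
  · nlinarith [hb]

set_option maxHeartbeats 1000000 in
/-- For `β(r) = √(−r·u⋆(r))` with `u⋆(r) = T_in·R_in·log(r/R₀)`, there is a constant `C > 0`
such that on `(R_in, R₀)` one has `|β| ≤ C√(R₀−r)`, `|β'| ≤ C/√(R₀−r)` and
`|β''| ≤ C/(R₀−r)^{3/2}`. -/
theorem beta_estimates (Rin R0 Tin : ℝ) (hRin : 0 < Rin) (hR : Rin < R0) (hT : 0 < Tin) :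
    ∃ C > 0, ∀ r ∈ Set.Ioo Rin R0,
      |Real.sqrt (-(r * (Tin * Rin * Real.log (r / R0))))| ≤ C * Real.sqrt (R0 - r) ∧
      |deriv (fun s => Real.sqrt (-(s * (Tin * Rin * Real.log (s / R0))))) r| ≤
        C / Real.sqrt (R0 - r) ∧
      |deriv (deriv (fun s => Real.sqrt (-(s * (Tin * Rin * Real.log (s / R0)))))) r| ≤
        C / (R0 - r) ^ ((3 : ℝ) / 2) := by
  have hR0 : (0:ℝ) < R0 := hRin.trans hR
  set K := Tin * Rin with hKdef
  have hK : 0 < K := mul_pos hT hRin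
  set L := Real.log (R0 / Rin) with hLdef
  have hL : 0 ≤ L := Real.log_nonneg (by rw [le_div_iff₀ hRin]; linarith)
  set c1 := K * Rin / R0 with hc1def
  have hc1 : 0 < c1 := by positivity
  set M := K * (1 + L) with hMdef
  have hM : 0 < M := by positivity
  set M2 := K / Rin with hM2def
  have hM2 : 0 < M2 := by positivity
  set s1 := Real.sqrt c1 with hs1def
  have hs1 : 0 < s1 := Real.sqrt_pos.mpr hc1
  -- derivative of the inner function
  have hFd : ∀ s : ℝ, 0 < s →
      HasDerivAt (fun u : ℝ => -(u * (K * Real.log (u / R0)))) (-(K * (Real.log (s / R0) + 1))) s := by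
    intro s hs
    have h1 : HasDerivAt (fun u : ℝ => u / R0) (1 / R0) s := (hasDerivAt_id s).div_const R0
    have h2 : HasDerivAt (fun u : ℝ => Real.log (u / R0)) (1 / R0 / (s / R0)) s :=
      h1.log (by positivity)
    have h3 : (1:ℝ) / R0 / (s / R0) = 1 / s := by field_simp
    rw [h3] at h2
    have h4 := ((hasDerivAt_id' (𝕜 := ℝ) (x := s)).mul (h2.const_mul K)).neg
    refine h4.congr_deriv ?_
    have : s * (1 / s) = 1 := by field_simp
    linear_combination (-K) * this
  -- positivity of the inner function on the interval
  have hFpos : ∀ s ∈ Set.Ioo Rin R0, 0 < -(s * (K * Real.log (s / R0))) := by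
    intro s hs
    have hspos : 0 < s := hRin.trans hs.1
    have hlogneg : Real.log (s / R0) < 0 :=
      Real.log_neg (by positivity) ((div_lt_one hR0).mpr hs.2)
    linarith only [mul_pos (mul_pos hspos hK) (neg_pos.mpr hlogneg)]
  -- derivative of β
  have hbd : ∀ s ∈ Set.Ioo Rin R0,
      HasDerivAt (fun u : ℝ => Real.sqrt (-(u * (K * Real.log (u / R0)))))
        (1 / (2 * Real.sqrt (-(s * (K * Real.log (s / R0))))) * (-(K * (Real.log (s / R0) + 1)))) s := by
    intro s hs
    have hpos := hFpos s hs
    have := (Real.hasDerivAt_sqrt (ne_of_gt hpos)).comp s (hFd s (hRin.trans hs.1))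
    simpa [Function.comp_def] using this
  refine ⟨Real.sqrt K + M / (2 * s1) + M2 * R0 / (2 * s1) + M ^ 2 / (4 * (c1 * s1)), by positivity,
    ?_⟩
  intro r hr
  obtain ⟨hr1, hr2⟩ := hr
  have hrpos : 0 < r := hRin.trans hr1
  have hrne : r ≠ 0 := ne_of_gt hrpos
  have htpos : 0 < R0 - r := sub_pos.mpr hr2
  have hlogneg : Real.log (r / R0) < 0 :=
    Real.log_neg (by positivity) ((div_lt_one hR0).mpr hr2)
  have hinv : Real.log (R0 / r) = -Real.log (r / R0) := by rw [← Real.log_inv, inv_div]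
  have hloglb : -L ≤ Real.log (r / R0) := by
    have h1 : Real.log (R0 / r) ≤ Real.log (R0 / Rin) := by
      apply Real.log_le_log (by positivity)
      exact div_le_div_of_nonneg_left hR0.le hRin hr1.le
    rw [hinv] at h1
    rw [hLdef]
    linarith only [h1]
  -- bounds on a = F r
  have hub' : Real.log (R0 / r) ≤ R0 / r - 1 := Real.log_le_sub_one_of_pos (by positivity)
  have hlb' : Real.log (r / R0) ≤ r / R0 - 1 := Real.log_le_sub_one_of_pos (by positivity)
  have haub : -(r * (K * Real.log (r / R0))) ≤ K * (R0 - r) := by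
    have hub2 : -Real.log (r / R0) ≤ R0 / r - 1 := by rw [← hinv]; exact hub'
    exact beta_aux_ub K R0 r _ hK hrpos hub2
  have halb : c1 * (R0 - r) ≤ -(r * (K * Real.log (r / R0))) := by
    rw [hc1def]
    exact beta_aux_lb K Rin R0 r _ hK hRin hR0 hr1.le hr2.le hlb'
  set a := -(r * (K * Real.log (r / R0))) with hadef
  have hapos : 0 < a := hFpos r ⟨hr1, hr2⟩
  set sa := Real.sqrt a with hsadef
  have hsapos : 0 < sa := Real.sqrt_pos.mpr hapos
  have hsa2 : sa ^ 2 = a := Real.sq_sqrt hapos.le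
  set st := Real.sqrt (R0 - r) with hstdef
  have hstpos : 0 < st := Real.sqrt_pos.mpr htpos
  have hst2 : st ^ 2 = R0 - r := Real.sq_sqrt htpos.le
  have hsalb : s1 * st ≤ sa := by
    rw [hs1def, hstdef, ← Real.sqrt_mul hc1.le]
    exact Real.sqrt_le_sqrt halb
  have hsaub : sa ≤ Real.sqrt K * st := by
    rw [hstdef, ← Real.sqrt_mul hK.le]
    exact Real.sqrt_le_sqrt haub
  set v := -(K * (Real.log (r / R0) + 1)) with hvdef
  have hv : |v| ≤ M := by
    rw [hvdef, hMdef]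
    exact beta_aux_v K L _ hK hL hlogneg hloglb
  have hKr : K / r ≤ M2 := by
    rw [hM2def]
    exact div_le_div_of_nonneg_left hK.le hRin hr1.le
  -- auxiliary positivity for C pieces
  have hc2 : (0:ℝ) < M / (2 * s1) := by positivity
  have hc3 : (0:ℝ) < M2 * R0 / (2 * s1) := by positivity
  have hc4 : (0:ℝ) < M ^ 2 / (4 * (c1 * s1)) := by positivity
  have hsqK : (0:ℝ) < Real.sqrt K := Real.sqrt_pos.mpr hK
  refine ⟨?_, ?_, ?_⟩
  · -- bound on β
    calc |sa| = sa := abs_of_nonneg hsapos.le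
      _ ≤ Real.sqrt K * st := hsaub
      _ ≤ (Real.sqrt K + M / (2 * s1) + M2 * R0 / (2 * s1) + M ^ 2 / (4 * (c1 * s1))) * st := by
          gcongr
          linarith only [hc2, hc3, hc4]
  · -- bound on β'
    have hdb : deriv (fun u : ℝ => Real.sqrt (-(u * (K * Real.log (u / R0))))) r
        = 1 / (2 * sa) * v := (hbd r ⟨hr1, hr2⟩).deriv
    rw [hdb]
    have h1 : |1 / (2 * sa) * v| = |v| / (2 * sa) := by
      rw [abs_mul, abs_of_nonneg (by positivity : (0:ℝ) ≤ 1 / (2 * sa)), one_div, inv_mul_eq_div]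
    rw [h1]
    calc |v| / (2 * sa) ≤ (M / (2 * s1)) / st := by
          rw [div_le_div_iff₀ (by positivity) hstpos]
          calc |v| * st ≤ M * st := mul_le_mul_of_nonneg_right hv hstpos.le
            _ = M / (2 * s1) * (2 * (s1 * st)) := by field_simp
            _ ≤ M / (2 * s1) * (2 * sa) := by gcongr
      _ ≤ (Real.sqrt K + M / (2 * s1) + M2 * R0 / (2 * s1) + M ^ 2 / (4 * (c1 * s1))) / st := by
          gcongr
          linarith only [hsqK, hc3, hc4]
  · -- bound on β''
    have hev : deriv (fun u : ℝ => Real.sqrt (-(u * (K * Real.log (u / R0)))))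
        =ᶠ[nhds r] fun s => -(K * (Real.log (s / R0) + 1)) /
          (2 * Real.sqrt (-(s * (K * Real.log (s / R0))))) := by
      filter_upwards [isOpen_Ioo.mem_nhds (⟨hr1, hr2⟩ : r ∈ Set.Ioo Rin R0)] with s hs
      rw [(hbd s hs).deriv, one_div, inv_mul_eq_div]
    have hEq := hev.deriv_eq
    -- derivative of numerator
    have hlog : HasDerivAt (fun s : ℝ => Real.log (s / R0)) (1 / r) r := by
      have h1 : HasDerivAt (fun u : ℝ => u / R0) (1 / R0) r := (hasDerivAt_id r).div_const R0
      have h2 := h1.log (by positivity : r / R0 ≠ 0)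
      have h3 : (1:ℝ) / R0 / (r / R0) = 1 / r := by field_simp
      rwa [h3] at h2
    have hnum : HasDerivAt (fun s : ℝ => -(K * (Real.log (s / R0) + 1))) (-(K * (1 / r))) r :=
      (((hlog.add_const 1)).const_mul K).neg
    have hden : HasDerivAt (fun s : ℝ => 2 * Real.sqrt (-(s * (K * Real.log (s / R0)))))
        (2 * (1 / (2 * sa) * v)) r := (hbd r ⟨hr1, hr2⟩).const_mul 2
    have hdenne : (2 : ℝ) * sa ≠ 0 := by positivity
    have hGd := hnum.div hden hdenne
    have hE2 := hEq.trans hGd.deriv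
    rw [hE2]
    have hEexp : (-(K * (1 / r)) * (2 * sa) - v * (2 * (1 / (2 * sa) * v))) / (2 * sa) ^ 2
        = -((K / r) / (2 * sa) + v ^ 2 / (4 * (a * sa))) := by
      rw [← hsa2]
      field_simp
      ring
    rw [hEexp]
    have hv2 : v ^ 2 ≤ M ^ 2 := by
      have h := abs_le.mp hv
      exact sq_le_sq' h.1 h.2
    have h32 : (R0 - r) ^ ((3:ℝ) / 2) = (R0 - r) * st := by
      rw [show (3:ℝ)/2 = 1 + 1/2 by norm_num, Real.rpow_add htpos, Real.rpow_one,
        hstdef, Real.sqrt_eq_rpow]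
    have hterm1 : (K / r) / (2 * sa) ≤ (M2 * R0 / (2 * s1)) / ((R0 - r) * st) := by
      rw [div_le_div_iff₀ (by positivity) (by positivity)]
      calc K / r * ((R0 - r) * st)
          ≤ M2 * (R0 * st) :=
            mul_le_mul hKr
              (mul_le_mul_of_nonneg_right (by linarith only [hrpos] : R0 - r ≤ R0) hstpos.le)
              (by positivity) hM2.le
        _ = M2 * R0 / (2 * s1) * (2 * (s1 * st)) := by field_simp
        _ ≤ M2 * R0 / (2 * s1) * (2 * sa) := by gcongr
    have hterm2 : v ^ 2 / (4 * (a * sa)) ≤ (M ^ 2 / (4 * (c1 * s1))) / ((R0 - r) * st) := by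
      rw [div_le_div_iff₀ (by positivity) (by positivity)]
      have has : (c1 * (R0 - r)) * (s1 * st) ≤ a * sa :=
        mul_le_mul halb hsalb (by positivity) hapos.le
      calc v ^ 2 * ((R0 - r) * st) ≤ M ^ 2 * ((R0 - r) * st) :=
            mul_le_mul_of_nonneg_right hv2 (by positivity)
        _ = M ^ 2 / (4 * (c1 * s1)) * (4 * ((c1 * (R0 - r)) * (s1 * st))) := by
            field_simp
        _ ≤ M ^ 2 / (4 * (c1 * s1)) * (4 * (a * sa)) := by gcongr
    calc |-((K / r) / (2 * sa) + v ^ 2 / (4 * (a * sa)))|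
        = (K / r) / (2 * sa) + v ^ 2 / (4 * (a * sa)) := by
          rw [abs_neg, abs_of_nonneg (by positivity)]
      _ ≤ (M2 * R0 / (2 * s1)) / ((R0 - r) * st) + (M ^ 2 / (4 * (c1 * s1))) / ((R0 - r) * st) :=
          add_le_add hterm1 hterm2
      _ = (M2 * R0 / (2 * s1) + M ^ 2 / (4 * (c1 * s1))) / ((R0 - r) * st) := by
          rw [← add_div]
      _ ≤ (Real.sqrt K + M / (2 * s1) + M2 * R0 / (2 * s1) + M ^ 2 / (4 * (c1 * s1)))
            / ((R0 - r) * st) := by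
          gcongr
          linarith only [hsqK, hc2]
      _ = (Real.sqrt K + M / (2 * s1) + M2 * R0 / (2 * s1) + M ^ 2 / (4 * (c1 * s1)))
            / (R0 - r) ^ ((3:ℝ) / 2) := by rw [h32]
end
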